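/- Positive definiteness of the scheme operator A: Let Δt > 0, M > 0, β ≥ 0, α ≥ 0 and set c = 2/Δt^2 + β/Δt. Let u be a grid function such that u, Δ_h u and Δ_h^2 u (each extended to ghost cells via its own discrete Neumann BC) all satisfy the discrete Neumann BC. Then (c u - (M/2) Δ_h^3 u - (Mα/2) Δ_h u, u)_m = c ‖u‖_m^2 + (M/2) ‖∇_h(Δ_h u)‖^2 + (Mα/2) ‖∇_h u‖^2; in particular this quantity is strictly positive unless u_{i,j} = 0 at all interior cells. -/

import Mathlib

open Finset

/-- Discrete inner product `(f,g)_m` over interior cells `i = 1,...,Nx`, `j = 1,...,Ny`. -/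
noncomputable def innerM (Nx Ny : ℕ) (hx hy : ℝ) (f g : ℕ → ℕ → ℝ) : ℝ :=
  ∑ i ∈ Finset.Icc 1 Nx, ∑ j ∈ Finset.Icc 1 Ny, hx * hy * f i j * g i j

/-- Discrete inner product `(u,v)_x` for x-edge arrays; index `i` stands for `i + 1/2`. -/
noncomputable def innerX (Nx Ny : ℕ) (hx hy : ℝ) (u v : ℕ → ℕ → ℝ) : ℝ :=
  ∑ i ∈ Finset.Icc 1 (Nx - 1), ∑ j ∈ Finset.Icc 1 Ny, hx * hy * u i j * v i j

/-- Discrete inner product `(u,v)_y` for y-edge arrays; index `j` stands for `j + 1/2`. -/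
noncomputable def innerY (Nx Ny : ℕ) (hx hy : ℝ) (u v : ℕ → ℕ → ℝ) : ℝ :=
  ∑ i ∈ Finset.Icc 1 Nx, ∑ j ∈ Finset.Icc 1 (Ny - 1), hx * hy * u i j * v i j

/-- `[d_x g]_{i+1/2, j}`, stored at index `(i, j)`. -/
noncomputable def dX (hx : ℝ) (g : ℕ → ℕ → ℝ) : ℕ → ℕ → ℝ := fun i j => (g (i + 1) j - g i j) / hx

/-- `[d_y g]_{i, j+1/2}`, stored at index `(i, j)`. -/
noncomputable def dY (hy : ℝ) (g : ℕ → ℕ → ℝ) : ℕ → ℕ → ℝ := fun i j => (g i (j + 1) - g i j) / hy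

/-- `[D_x w]_{i,j} = (w_{i+1/2,j} - w_{i-1/2,j})/h_x` for an x-edge array `w`. -/
noncomputable def DX (hx : ℝ) (w : ℕ → ℕ → ℝ) : ℕ → ℕ → ℝ := fun i j => (w i j - w (i - 1) j) / hx

/-- `[D_y w]_{i,j} = (w_{i,j+1/2} - w_{i,j-1/2})/h_y` for a y-edge array `w`. -/
noncomputable def DY (hy : ℝ) (w : ℕ → ℕ → ℝ) : ℕ → ℕ → ℝ := fun i j => (w i j - w i (j - 1)) / hy

/-- Five-point discrete Laplacian `[Δ_h g]_{i,j}` (meaningful at interior cells). -/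
noncomputable def lapH (hx hy : ℝ) (g : ℕ → ℕ → ℝ) : ℕ → ℕ → ℝ := fun i j =>
  (g (i + 1) j - 2 * g i j + g (i - 1) j) / hx ^ 2 +
  (g i (j + 1) - 2 * g i j + g i (j - 1)) / hy ^ 2

/-- The discrete homogeneous Neumann boundary condition for a grid function. -/
noncomputable def NeumannBC (Nx Ny : ℕ) (g : ℕ → ℕ → ℝ) : Prop :=
  (∀ j ∈ Finset.Icc 1 Ny, g 0 j = g 1 j ∧ g (Nx + 1) j = g Nx j) ∧
  (∀ i ∈ Finset.Icc 1 Nx, g i 0 = g i 1 ∧ g i (Ny + 1) = g i Ny)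

/-- Extension of interior data to ghost cells via the discrete Neumann BC
(clamping of indices to the interior range). -/
noncomputable def extN (Nx Ny : ℕ) (u : ℕ → ℕ → ℝ) : ℕ → ℕ → ℝ := fun i j =>
  u (min (max i 1) Nx) (min (max j 1) Ny)

/-- `‖∇_h g‖² = (d_x g, d_x g)_x + (d_y g, d_y g)_y`. -/
noncomputable def gradSq (Nx Ny : ℕ) (hx hy : ℝ) (g : ℕ → ℕ → ℝ) : ℝ :=
  innerX Nx Ny hx hy (dX hx g) (dX hx g) + innerY Nx Ny hx hy (dY hy g) (dY hy g)

/-- `Δ_h² g`, where `Δ_h g` is extended to ghost cells via its own Neumann BC. -/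
noncomputable def lap2H (Nx Ny : ℕ) (hx hy : ℝ) (g : ℕ → ℕ → ℝ) : ℕ → ℕ → ℝ :=
  lapH hx hy (extN Nx Ny (lapH hx hy g))

/-- `Δ_h³ g`, where `Δ_h g`, `Δ_h² g` are extended to ghost cells via their own Neumann BC. -/
noncomputable def lap3H (Nx Ny : ℕ) (hx hy : ℝ) (g : ℕ → ℕ → ℝ) : ℕ → ℕ → ℝ :=
  lapH hx hy (extN Nx Ny (lap2H Nx Ny hx hy g))

/-- Discrete energy `E_1^h(g) = Σ h_x h_y F(g_{ij})` with `F(s) = s⁴/4`. -/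
noncomputable def E1h (Nx Ny : ℕ) (hx hy : ℝ) (g : ℕ → ℕ → ℝ) : ℝ :=
  ∑ i ∈ Finset.Icc 1 Nx, ∑ j ∈ Finset.Icc 1 Ny, hx * hy * (g i j ^ 4 / 4)

/-!
Summation by parts under the discrete Neumann condition gives Green's formula
`(Δ_h v, w)_m = -(d_x v, d_x w)_x - (d_y v, d_y w)_y`, hence `(Δ_h u, u)_m = -‖∇_h u‖²` and,
moving one `Δ_h` of `Δ_h³ u = Δ_h (Δ_h² u)` onto `u`, `(Δ_h³ u, u)_m = -‖∇_h (Δ_h u)‖²`.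
The clamped ghost-cell extensions of `Δ_h u` and `Δ_h² u` satisfy the Neumann condition by
construction, so Green's formula applies to them. The energy identity follows by linearity, and
its right-hand side is positive because `c > 0` and the gradient terms are nonnegative.
-/

section GridCalculus

variable {Nx Ny : ℕ} {hx hy : ℝ}

theorem sum_Icc_secondDiff_mul_telescope (N : ℕ) (a b : ℕ → ℝ) :
    ∑ i ∈ Icc 1 (N + 1), (a (i + 1) - 2 * a i + a (i - 1)) * b i =
      (a (N + 2) - a (N + 1)) * b (N + 1) - (a 1 - a 0) * b 1 -
        ∑ i ∈ Icc 1 N, (a (i + 1) - a i) * (b (i + 1) - b i) := by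
  induction N with
  | zero => simp; ring
  | succ N ih =>
    rw [sum_Icc_succ_top (by omega), ih, sum_Icc_succ_top (by omega)]
    simp only [Nat.add_sub_cancel]
    ring

theorem sum_Icc_secondDiff_mul_of_neumann (N : ℕ) (a b : ℕ → ℝ)
    (h0 : a 0 = a 1) (hN : a (N + 1) = a N) :
    ∑ i ∈ Icc 1 N, (a (i + 1) - 2 * a i + a (i - 1)) * b i =
      -∑ i ∈ Icc 1 (N - 1), (a (i + 1) - a i) * (b (i + 1) - b i) := by
  cases N with
  | zero => simp
  | succ N =>
    rw [sum_Icc_secondDiff_mul_telescope, h0, hN]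
    simp

theorem innerX_comm (u v : ℕ → ℕ → ℝ) : innerX Nx Ny hx hy u v = innerX Nx Ny hx hy v u :=
  sum_congr rfl fun _ _ => sum_congr rfl fun _ _ => by ring

theorem innerY_comm (u v : ℕ → ℕ → ℝ) : innerY Nx Ny hx hy u v = innerY Nx Ny hx hy v u :=
  sum_congr rfl fun _ _ => sum_congr rfl fun _ _ => by ring

theorem innerM_comm (f g : ℕ → ℕ → ℝ) : innerM Nx Ny hx hy f g = innerM Nx Ny hx hy g f :=
  sum_congr rfl fun _ _ => sum_congr rfl fun _ _ => by ring

theorem innerM_sub_left (f g w : ℕ → ℕ → ℝ) :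
    innerM Nx Ny hx hy (fun i j => f i j - g i j) w =
      innerM Nx Ny hx hy f w - innerM Nx Ny hx hy g w := by
  simp only [innerM, ← sum_sub_distrib]
  exact sum_congr rfl fun _ _ => sum_congr rfl fun _ _ => by ring

theorem innerM_smul_left (a : ℝ) (f w : ℕ → ℕ → ℝ) :
    innerM Nx Ny hx hy (fun i j => a * f i j) w = a * innerM Nx Ny hx hy f w := by
  simp only [innerM, mul_sum]
  exact sum_congr rfl fun _ _ => sum_congr rfl fun _ _ => by ring

theorem extN_of_mem {g : ℕ → ℕ → ℝ} {i j : ℕ} (hi : i ∈ Icc 1 Nx) (hj : j ∈ Icc 1 Ny) :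
    extN Nx Ny g i j = g i j := by
  rw [mem_Icc] at hi hj
  simp only [extN]
  congr 1 <;> omega

theorem neumannBC_extN (g : ℕ → ℕ → ℝ) : NeumannBC Nx Ny (extN Nx Ny g) := by
  refine ⟨fun j _ => ⟨?_, ?_⟩, fun i _ => ⟨?_, ?_⟩⟩ <;> simp only [extN] <;> congr 1 <;> omega

theorem innerM_extN_left (f g : ℕ → ℕ → ℝ) :
    innerM Nx Ny hx hy (extN Nx Ny f) g = innerM Nx Ny hx hy f g :=
  sum_congr rfl fun _ hi => sum_congr rfl fun _ hj => by rw [extN_of_mem hi hj]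

theorem innerM_extN_right (f g : ℕ → ℕ → ℝ) :
    innerM Nx Ny hx hy f (extN Nx Ny g) = innerM Nx Ny hx hy f g := by
  rw [innerM_comm, innerM_extN_left, innerM_comm]

theorem innerM_lapH_of_neumannBC {v : ℕ → ℕ → ℝ} (hv : NeumannBC Nx Ny v) (w : ℕ → ℕ → ℝ) :
    innerM Nx Ny hx hy (lapH hx hy v) w =
      -(innerX Nx Ny hx hy (dX hx v) (dX hx w) + innerY Nx Ny hx hy (dY hy v) (dY hy w)) := by
  have hsplit : innerM Nx Ny hx hy (lapH hx hy v) w =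
      hx * hy / hx ^ 2 * ∑ j ∈ Icc 1 Ny, ∑ i ∈ Icc 1 Nx,
          (v (i + 1) j - 2 * v i j + v (i - 1) j) * w i j +
        hx * hy / hy ^ 2 * ∑ i ∈ Icc 1 Nx, ∑ j ∈ Icc 1 Ny,
          (v i (j + 1) - 2 * v i j + v i (j - 1)) * w i j := by
    rw [sum_comm, mul_sum, mul_sum, ← sum_add_distrib]
    refine sum_congr rfl fun i _ => ?_
    rw [mul_sum, mul_sum, ← sum_add_distrib]
    exact sum_congr rfl fun j _ => by simp only [lapH]; ring
  rw [hsplit, sum_congr rfl fun j hj => sum_Icc_secondDiff_mul_of_neumann Nx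
      (fun i => v i j) (fun i => w i j) (hv.1 j hj).1 (hv.1 j hj).2,
    sum_congr rfl fun i hi => sum_Icc_secondDiff_mul_of_neumann Ny
      (fun j => v i j) (fun j => w i j) (hv.2 i hi).1 (hv.2 i hi).2,
    innerX, innerY, sum_comm (s := Icc 1 (Nx - 1))]
  simp only [sum_neg_distrib, mul_neg, mul_sum, neg_add]
  congr 1 <;> refine congrArg _ (sum_congr rfl fun _ _ => sum_congr rfl fun _ _ => ?_) <;>
    simp only [dX, dY] <;> ring

theorem innerM_lapH_self {v : ℕ → ℕ → ℝ} (hv : NeumannBC Nx Ny v) :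
    innerM Nx Ny hx hy (lapH hx hy v) v = -gradSq Nx Ny hx hy v :=
  innerM_lapH_of_neumannBC hv v

theorem innerM_lapH_comm {v w : ℕ → ℕ → ℝ} (hv : NeumannBC Nx Ny v) (hw : NeumannBC Nx Ny w) :
    innerM Nx Ny hx hy (lapH hx hy v) w = innerM Nx Ny hx hy v (lapH hx hy w) := by
  rw [innerM_lapH_of_neumannBC hv, innerM_comm, innerM_lapH_of_neumannBC hw, innerX_comm,
    innerY_comm]

theorem innerM_lap3H_self {u : ℕ → ℕ → ℝ} (hu : NeumannBC Nx Ny u) :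
    innerM Nx Ny hx hy (lap3H Nx Ny hx hy u) u =
      -gradSq Nx Ny hx hy (extN Nx Ny (lapH hx hy u)) := by
  rw [lap3H, innerM_lapH_comm (neumannBC_extN _) hu, innerM_extN_left, lap2H,
    ← innerM_extN_right (Nx := Nx) (Ny := Ny) _ (lapH hx hy u),
    innerM_lapH_self (neumannBC_extN _)]

theorem innerM_self_pos (hhx : 0 < hx) (hhy : 0 < hy) {u : ℕ → ℕ → ℝ}
    (h : ∃ i ∈ Icc 1 Nx, ∃ j ∈ Icc 1 Ny, u i j ≠ 0) : 0 < innerM Nx Ny hx hy u u := by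
  obtain ⟨i₀, hi₀, j₀, hj₀, hne⟩ := h
  have hterm : ∀ i j, 0 ≤ hx * hy * u i j * u i j := fun i j => by
    rw [mul_assoc]; exact mul_nonneg (mul_pos hhx hhy).le (mul_self_nonneg _)
  refine sum_pos' (fun i _ => sum_nonneg fun j _ => hterm i j) ⟨i₀, hi₀, ?_⟩
  refine sum_pos' (fun j _ => hterm i₀ j) ⟨j₀, hj₀, ?_⟩
  rw [mul_assoc]
  exact mul_pos (mul_pos hhx hhy) (mul_self_pos.2 hne)

theorem gradSq_nonneg (hhx : 0 < hx) (hhy : 0 < hy) (g : ℕ → ℕ → ℝ) :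
    0 ≤ gradSq Nx Ny hx hy g := by
  unfold gradSq innerX innerY
  refine add_nonneg ?_ ?_ <;>
    exact sum_nonneg fun _ _ => sum_nonneg fun _ _ => by
      rw [mul_assoc]; exact mul_nonneg (mul_pos hhx hhy).le (mul_self_nonneg _)

theorem innerM_schemeOperator_self (c M α : ℝ) {u : ℕ → ℕ → ℝ} (hu : NeumannBC Nx Ny u) :
    innerM Nx Ny hx hy
        (fun i j => c * u i j - M / 2 * lap3H Nx Ny hx hy u i j
          - M * α / 2 * lapH hx hy u i j) u =
      c * innerM Nx Ny hx hy u u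
        + M / 2 * gradSq Nx Ny hx hy (extN Nx Ny (lapH hx hy u))
        + M * α / 2 * gradSq Nx Ny hx hy u := by
  simp only [innerM_sub_left, innerM_smul_left, innerM_lap3H_self hu, innerM_lapH_self hu]
  ring

end GridCalculus

theorem scheme_operator_positive_general
    (Nx Ny : ℕ)
    (hx hy : ℝ) (hhx : 0 < hx) (hhy : 0 < hy)
    (Δt M β α c : ℝ) (hΔt : 0 < Δt) (hM : 0 < M) (hβ : 0 ≤ β) (hα : 0 ≤ α)
    (hc : c = 2 / Δt ^ 2 + β / Δt)
    (u : ℕ → ℕ → ℝ) (hu : NeumannBC Nx Ny u) :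
    innerM Nx Ny hx hy
        (fun i j => c * u i j - M / 2 * lap3H Nx Ny hx hy u i j
          - M * α / 2 * lapH hx hy u i j) u =
      c * innerM Nx Ny hx hy u u
        + M / 2 * gradSq Nx Ny hx hy (extN Nx Ny (lapH hx hy u))
        + M * α / 2 * gradSq Nx Ny hx hy u ∧
    ((∃ i ∈ Finset.Icc 1 Nx, ∃ j ∈ Finset.Icc 1 Ny, u i j ≠ 0) →
      0 < innerM Nx Ny hx hy
        (fun i j => c * u i j - M / 2 * lap3H Nx Ny hx hy u i j
          - M * α / 2 * lapH hx hy u i j) u) := by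
  refine ⟨innerM_schemeOperator_self c M α hu, fun hne => ?_⟩
  have hc_pos : 0 < c := by rw [hc]; positivity
  rw [innerM_schemeOperator_self c M α hu]
  refine add_pos_of_pos_of_nonneg (add_pos_of_pos_of_nonneg ?_ ?_) ?_
  · exact mul_pos hc_pos (innerM_self_pos hhx hhy hne)
  · exact mul_nonneg (by positivity) (gradSq_nonneg hhx hhy _)
  · exact mul_nonneg (by positivity) (gradSq_nonneg hhx hhy _)

/-- Positive definiteness of the scheme operator `A = cI - (M/2)Δ_h³ - (Mα/2)Δ_h`
with `c = 2/Δt² + β/Δt`: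
`(A u, u)_m = c‖u‖_m² + (M/2)‖∇_h(Δ_h u)‖² + (Mα/2)‖∇_h u‖²`, which is strictly
positive unless `u` vanishes at all interior cells. -/
theorem scheme_operator_positive
    (Nx Ny : ℕ) (hNx : 1 ≤ Nx) (hNy : 1 ≤ Ny)
    (hx hy : ℝ) (hhx : 0 < hx) (hhy : 0 < hy)
    (Δt M β α c : ℝ) (hΔt : 0 < Δt) (hM : 0 < M) (hβ : 0 ≤ β) (hα : 0 ≤ α)
    (hc : c = 2 / Δt ^ 2 + β / Δt)
    (u : ℕ → ℕ → ℝ) (hu : NeumannBC Nx Ny u)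
    (hΔu : NeumannBC Nx Ny (extN Nx Ny (lapH hx hy u)))
    (hΔΔu : NeumannBC Nx Ny (extN Nx Ny (lap2H Nx Ny hx hy u))) :
    innerM Nx Ny hx hy
        (fun i j => c * u i j - M / 2 * lap3H Nx Ny hx hy u i j
          - M * α / 2 * lapH hx hy u i j) u =
      c * innerM Nx Ny hx hy u u
        + M / 2 * gradSq Nx Ny hx hy (extN Nx Ny (lapH hx hy u))
        + M * α / 2 * gradSq Nx Ny hx hy u ∧
    ((∃ i ∈ Finset.Icc 1 Nx, ∃ j ∈ Finset.Icc 1 Ny, u i j ≠ 0) →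
      0 < innerM Nx Ny hx hy
        (fun i j => c * u i j - M / 2 * lap3H Nx Ny hx hy u i j
          - M * α / 2 * lapH hx hy u i j) u) :=
  scheme_operator_positive_general Nx Ny hx hy hhx hhy Δt M β α c hΔt hM hβ hα hc u hu
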